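/- arXiv:gr-qc/9702051 — 3 statements merged into one kernel-verified Lean document; each statement's English description precedes it below -/
import Mathlib

section
/- For every vector u ∈ ℝ³ there exist vectors v, w ∈ ℝ³ such that u = v ×₃ w, ⟪v, w⟫ = 0, and ‖v‖ = ‖w‖ = √‖u‖. In particular, every vector in ℝ³ is the cross product of two vectors of equal length. -/
open Matrix RealInnerProductSpace

/-!
Choose a unit vector `e` orthogonal to `u`. By the triple product expansion
`e × (u × e) = ⟪e, e⟫ u - ⟪e, u⟫ e = u`, and by Lagrange's identity `‖u × e‖ = ‖u‖`.
Rescaling, `v = √‖u‖ • e` and `w = (√‖u‖)⁻¹ • (u × e)` work.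
-/

theorem exists_norm_eq_one_inner_eq_zero {𝕜 E : Type*} [RCLike 𝕜] [NormedAddCommGroup E]
    [InnerProductSpace 𝕜 E] [FiniteDimensional 𝕜 E] (h : 2 ≤ Module.finrank 𝕜 E) (u : E) :
    ∃ e : E, ‖e‖ = 1 ∧ inner 𝕜 e u = 0 := by
  have hspan : Module.finrank 𝕜 (𝕜 ∙ u) ≤ 1 := by
    simpa using finrank_span_le_card ({u} : Set E)
  have hsum := (𝕜 ∙ u).finrank_add_finrank_orthogonal
  obtain ⟨x, hx, hx0⟩ : ∃ x ∈ (𝕜 ∙ u)ᗮ, x ≠ 0 :=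
    Submodule.exists_mem_ne_zero_of_ne_bot fun hbot => by
      rw [hbot, finrank_bot] at hsum
      omega
  refine ⟨(‖x‖ : 𝕜)⁻¹ • x, norm_smul_inv_norm hx0, ?_⟩
  rw [inner_smul_left, Submodule.mem_orthogonal_singleton_iff_inner_left.1 hx, mul_zero]

theorem cross_cross_self_of_dot_eq_zero {R : Type*} [CommRing R] {e u : Fin 3 → R}
    (he : e ⬝ᵥ e = 1) (heu : e ⬝ᵥ u = 0) : e ⨯₃ (u ⨯₃ e) = u := by
  rw [cross_cross_eq_smul_sub_smul', he, dotProduct_comm, heu, one_smul, zero_smul, sub_zero]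

theorem EuclideanSpace.real_inner_eq_dotProduct {ι : Type*} [Fintype ι]
    (x y : EuclideanSpace ℝ ι) : ⟪x, y⟫ = x ⬝ᵥ y := by
  rw [inner_eq_star_dotProduct, star_trivial, dotProduct_comm]

theorem EuclideanSpace.norm_toLp_cross_of_inner_eq_zero {u e : EuclideanSpace ℝ (Fin 3)}
    (h : ⟪u, e⟫ = 0) : ‖WithLp.toLp 2 (u ⨯₃ e)‖ = ‖u‖ * ‖e‖ := by
  rw [real_inner_eq_dotProduct] at h
  refine (sq_eq_sq₀ (norm_nonneg _) (by positivity)).1 ?_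
  simp only [mul_pow, ← real_inner_self_eq_norm_sq, real_inner_eq_dotProduct, cross_dot_cross, h]
  ring

/-- Every vector `u ∈ ℝ³` is the cross product `u = v ×₃ w` of two orthogonal vectors
`v, w` of equal length `√‖u‖`. -/
theorem exists_cross_product_decomposition (u : EuclideanSpace ℝ (Fin 3)) :
    ∃ v w : EuclideanSpace ℝ (Fin 3),
      (u : Fin 3 → ℝ) = (v : Fin 3 → ℝ) ⨯₃ (w : Fin 3 → ℝ) ∧
      ⟪v, w⟫ = 0 ∧ ‖v‖ = Real.sqrt ‖u‖ ∧ ‖w‖ = Real.sqrt ‖u‖ := by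
  obtain ⟨e, he, heu⟩ := exists_norm_eq_one_inner_eq_zero (𝕜 := ℝ) (by simp) u
  set s := Real.sqrt ‖u‖
  have hs : 0 ≤ s := Real.sqrt_nonneg _
  refine ⟨s • e, s⁻¹ • WithLp.toLp 2 (u ⨯₃ e), ?_, ?_, ?_, ?_⟩
  · have hee : e ⬝ᵥ e = 1 := by
      rw [← EuclideanSpace.real_inner_eq_dotProduct, real_inner_self_eq_norm_sq, he, one_pow]
    rw [EuclideanSpace.real_inner_eq_dotProduct] at heu
    rcases eq_or_ne s 0 with hs0 | hs0
    · have hu : u = 0 := norm_le_zero_iff.1 (Real.sqrt_eq_zero'.1 hs0)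
      simp [hu, hs0]
    · simp only [WithLp.ofLp_smul, map_smul, LinearMap.smul_apply, smul_smul,
        cross_cross_self_of_dot_eq_zero hee heu, inv_mul_cancel₀ hs0, one_smul]
  · rw [real_inner_smul_left, real_inner_smul_right, EuclideanSpace.real_inner_eq_dotProduct,
      WithLp.ofLp_toLp, dot_cross_self, mul_zero, mul_zero]
  · rw [norm_smul, he, Real.norm_of_nonneg hs, mul_one]
  · rw [norm_smul, EuclideanSpace.norm_toLp_cross_of_inner_eq_zero (by rwa [real_inner_comm]), he,
      mul_one, norm_inv, Real.norm_of_nonneg hs, ← Real.mul_self_sqrt (norm_nonneg u),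
      ← mul_assoc, inv_mul_mul_self]
end

section
/- Let U ⊆ ℝ × ℝ be a connected open set, let α_t, α_x : U → Matrix (Fin n) (Fin n) ℝ be smooth, and let f : U → Matrix (Fin n) (Fin n) ℝ be a smooth function satisfying ∂_t f + [α_t, f] = 0 and ∂_x f + [α_x, f] = 0 on U, where [a,b] = ab − ba. If f(p₀) = 0 for some point p₀ ∈ U, then f = 0 on all of U. -/
attribute [local instance] Matrix.normedAddCommGroup Matrix.normedSpace


lemma my_norm_mul_le (n : ℕ) (a b : Matrix (Fin n) (Fin n) ℝ) :
    ‖a * b‖ ≤ n * ‖a‖ * ‖b‖ := by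
  have h0 : (0:ℝ) ≤ n * ‖a‖ * ‖b‖ := by positivity
  rw [Matrix.norm_le_iff h0]
  intro i j
  calc ‖(a * b) i j‖ = ‖∑ k, a i k * b k j‖ := by rw [Matrix.mul_apply]
    _ ≤ ∑ k, ‖a i k * b k j‖ := norm_sum_le _ _
    _ ≤ ∑ _k : Fin n, ‖a‖ * ‖b‖ := by
        apply Finset.sum_le_sum
        intro k _
        rw [norm_mul]
        exact mul_le_mul (Matrix.norm_entry_le_entrywise_sup_norm a)
          (Matrix.norm_entry_le_entrywise_sup_norm b) (norm_nonneg _) (norm_nonneg _)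
    _ = n * ‖a‖ * ‖b‖ := by simp [mul_assoc]

open Set

lemma my_key (n : ℕ) (A g : ℝ → Matrix (Fin n) (Fin n) ℝ) (x0 x1 : ℝ)
    (hA : ContinuousOn A (uIcc x0 x1))
    (hg : ∀ x ∈ uIcc x0 x1, HasDerivAt g (g x * A x - A x * g x) x)
    (h0 : g x0 = 0) : g x1 = 0 := by
  -- bound on A
  obtain ⟨C0, hC0⟩ := (isCompact_uIcc).exists_bound_of_continuousOn hA
  set C : ℝ := max C0 0 with hCdef
  have hC : ∀ x ∈ uIcc x0 x1, ‖A x‖ ≤ C := fun x hx => (hC0 x hx).trans (le_max_left _ _)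
  have hCnn : (0:ℝ) ≤ C := le_max_right _ _
  -- clamped coefficient
  set lo := min x0 x1
  set hi := max x0 x1
  have hlohi : lo ≤ hi := min_le_max
  set B : ℝ → Matrix (Fin n) (Fin n) ℝ := fun x => A (max lo (min x hi)) with hBdef
  have hBmem : ∀ x : ℝ, max lo (min x hi) ∈ uIcc x0 x1 := by
    intro x
    rw [uIcc]
    exact ⟨le_max_left _ _, max_le hlohi (min_le_right _ _)⟩
  have hBeq : ∀ x ∈ uIcc x0 x1, B x = A x := by
    intro x hx
    rw [uIcc] at hx
    show A (max (min x0 x1) (min x (max x0 x1))) = A x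
    rw [min_eq_left hx.2, max_eq_right hx.1]
  have hBC : ∀ x : ℝ, ‖B x‖ ≤ C := fun x => hC _ (hBmem x)
  -- vector field
  set v : ℝ → Matrix (Fin n) (Fin n) ℝ → Matrix (Fin n) (Fin n) ℝ :=
    fun x y => y * B x - B x * y with hvdef
  set K : NNReal := Real.toNNReal (2 * n * C) with hKdef
  have hv : ∀ t, LipschitzWith K (v t) := by
    intro t
    apply LipschitzWith.of_dist_le_mul
    intro y z
    rw [dist_eq_norm, dist_eq_norm]
    have : v t y - v t z = (y - z) * B t - B t * (y - z) := by
      simp only [hvdef]; noncomm_ring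
    rw [this]
    calc ‖(y - z) * B t - B t * (y - z)‖
        ≤ ‖(y - z) * B t‖ + ‖B t * (y - z)‖ := norm_sub_le _ _
      _ ≤ n * ‖y - z‖ * ‖B t‖ + n * ‖B t‖ * ‖y - z‖ := by
          exact add_le_add (my_norm_mul_le n _ _) (my_norm_mul_le n _ _)
      _ ≤ n * ‖y - z‖ * C + n * C * ‖y - z‖ := by
          have h1 := hBC t
          gcongr
      _ = 2 * n * C * ‖y - z‖ := by ring
      _ = (K : ℝ) * ‖y - z‖ := by
          rw [hKdef, Real.coe_toNNReal]
          positivity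
  -- derivatives in terms of v
  have hg' : ∀ x ∈ uIcc x0 x1, HasDerivAt g (v x (g x)) x := by
    intro x hx
    show HasDerivAt g (g x * B x - B x * g x) x
    rw [hBeq x hx]
    exact hg x hx
  have hgc : ContinuousOn g (uIcc x0 x1) :=
    fun x hx => ((hg x hx).continuousAt).continuousWithinAt
  have hz : ∀ t : ℝ, v t 0 = 0 := by intro t; simp [hvdef]
  rcases le_total x0 x1 with h | h
  · have huIcc : uIcc x0 x1 = Icc x0 x1 := uIcc_of_le h
    have := ODE_solution_unique_of_mem_Icc_right (v := v) (s := fun _ => univ)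
      (K := K) (f := g) (g := fun _ => (0 : Matrix (Fin n) (Fin n) ℝ)) (a := x0) (b := x1)
      (fun t _ => (hv t).lipschitzOnWith (s := univ))
      (huIcc ▸ hgc)
      (fun t ht => (hg' t (huIcc ▸ Ico_subset_Icc_self ht)).hasDerivWithinAt)
      (fun _ _ => mem_univ _)
      continuousOn_const
      (fun t _ => by rw [hz t]; exact (hasDerivAt_const t _).hasDerivWithinAt)
      (fun _ _ => mem_univ _)
      (by simpa using h0)
    exact this (right_mem_Icc.mpr h)
  · have huIcc : uIcc x0 x1 = Icc x1 x0 := uIcc_of_ge h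
    have := ODE_solution_unique_of_mem_Icc_left (v := v) (s := fun _ => univ)
      (K := K) (f := g) (g := fun _ => (0 : Matrix (Fin n) (Fin n) ℝ)) (a := x1) (b := x0)
      (fun t _ => (hv t).lipschitzOnWith (s := univ))
      (huIcc ▸ hgc)
      (fun t ht => (hg' t (huIcc ▸ Ioc_subset_Icc_self ht)).hasDerivWithinAt)
      (fun _ _ => mem_univ _)
      continuousOn_const
      (fun t _ => by rw [hz t]; exact (hasDerivAt_const t _).hasDerivWithinAt)
      (fun _ _ => mem_univ _)
      (by simpa using h0)
    exact this (left_mem_Icc.mpr h)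

/-- A covariantly constant matrix-valued function (`∂ₜ f + [αt, f] = 0`,
`∂ₓ f + [αx, f] = 0`) on a connected open set `U ⊆ ℝ²` which vanishes at one point of `U`
vanishes identically on `U`. -/
theorem covariantly_constant_eq_zero_of_eq_zero_at_point
    (n : ℕ) (U : Set (ℝ × ℝ)) (hU : IsOpen U) (hUconn : IsConnected U)
    (αt αx f : ℝ × ℝ → Matrix (Fin n) (Fin n) ℝ)
    (hαt : ContDiffOn ℝ (⊤ : ℕ∞) αt U) (hαx : ContDiffOn ℝ (⊤ : ℕ∞) αx U)
    (hf : ContDiffOn ℝ (⊤ : ℕ∞) f U)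
    (heqt : ∀ p ∈ U, fderiv ℝ f p (1, 0) + (αt p * f p - f p * αt p) = 0)
    (heqx : ∀ p ∈ U, fderiv ℝ f p (0, 1) + (αx p * f p - f p * αx p) = 0)
    (p₀ : ℝ × ℝ) (hp₀ : p₀ ∈ U) (hf0 : f p₀ = 0) :
    ∀ p ∈ U, f p = 0 := by
  have hfd : ∀ p ∈ U, HasFDerivAt f (fderiv ℝ f p) p := fun p hp =>
    ((hf.contDiffAt (hU.mem_nhds hp)).differentiableAt (by simp)).hasFDerivAt
  -- derivative formulas
  have hderivT : ∀ p ∈ U, fderiv ℝ f p (1, 0) = f p * αt p - αt p * f p := by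
    intro p hp
    have h := heqt p hp
    rw [add_eq_zero_iff_eq_neg] at h
    rw [h, neg_sub]
  have hderivX : ∀ p ∈ U, fderiv ℝ f p (0, 1) = f p * αx p - αx p * f p := by
    intro p hp
    have h := heqx p hp
    rw [add_eq_zero_iff_eq_neg] at h
    rw [h, neg_sub]
  -- horizontal propagation
  have horiz : ∀ y0 x0 x1 : ℝ, (∀ x ∈ uIcc x0 x1, (x, y0) ∈ U) →
      f (x0, y0) = 0 → f (x1, y0) = 0 := by
    intro y0 x0 x1 hseg h0
    refine my_key n (fun x => αt (x, y0)) (fun x => f (x, y0)) x0 x1 ?_ ?_ h0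
    · exact (hαt.continuousOn.comp (Continuous.continuousOn (by continuity))
        fun x hx => hseg x hx)
    · intro x hx
      have hm := hseg x hx
      have h1 : HasDerivAt (fun x : ℝ => (x, y0)) ((1 : ℝ), (0 : ℝ)) x :=
        HasDerivAt.prodMk (hasDerivAt_id x) (hasDerivAt_const x y0)
      have h2 := (hfd _ hm).comp_hasDerivAt x h1
      replace h2 := h2.congr_deriv (hderivT _ hm)
      exact h2
  -- vertical propagation
  have vert : ∀ x0 y0 y1 : ℝ, (∀ y ∈ uIcc y0 y1, (x0, y) ∈ U) →
      f (x0, y0) = 0 → f (x0, y1) = 0 := by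
    intro x0 y0 y1 hseg h0
    refine my_key n (fun y => αx (x0, y)) (fun y => f (x0, y)) y0 y1 ?_ ?_ h0
    · exact (hαx.continuousOn.comp (Continuous.continuousOn (by continuity))
        fun y hy => hseg y hy)
    · intro y hy
      have hm := hseg y hy
      have h1 : HasDerivAt (fun y : ℝ => (x0, y)) ((0 : ℝ), (1 : ℝ)) y :=
        HasDerivAt.prodMk (hasDerivAt_const y x0) (hasDerivAt_id y)
      have h2 := (hfd _ hm).comp_hasDerivAt y h1
      replace h2 := h2.congr_deriv (hderivX _ hm)
      exact h2
  -- local propagation within a ball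
  have step : ∀ q ∈ U, f q = 0 → ∀ ε > 0, Metric.closedBall q ε ⊆ U →
      ∀ p ∈ Metric.ball q ε, f p = 0 := by
    intro q hq hq0 ε hε hball p hp
    rw [Metric.mem_ball, Prod.dist_eq, max_lt_iff] at hp
    have hseg1 : ∀ x ∈ uIcc q.1 p.1, (x, q.2) ∈ U := by
      intro x hx
      apply hball
      rw [Metric.mem_closedBall, Prod.dist_eq]
      refine max_le ?_ (by simpa using hε.le)
      calc dist x q.1 ≤ |p.1 - q.1| := by
            rw [Real.dist_eq]; exact abs_sub_left_of_mem_uIcc hx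
        _ ≤ ε := by rw [← Real.dist_eq]; exact hp.1.le
    have hmid : f (p.1, q.2) = 0 := by
      apply horiz q.2 q.1 p.1 hseg1
      simpa using hq0
    have hseg2 : ∀ y ∈ uIcc q.2 p.2, (p.1, y) ∈ U := by
      intro y hy
      apply hball
      rw [Metric.mem_closedBall, Prod.dist_eq]
      refine max_le hp.1.le ?_
      calc dist y q.2 ≤ |p.2 - q.2| := by
            rw [Real.dist_eq]; exact abs_sub_left_of_mem_uIcc hy
        _ ≤ ε := by rw [← Real.dist_eq]; exact hp.2.le
    have := vert p.1 q.2 p.2 hseg2 hmid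
    simpa using this
  -- clopen argument
  set O1 : Set (ℝ × ℝ) := {p | p ∈ U ∧ f p = 0} with hO1def
  set O2 : Set (ℝ × ℝ) := {p | p ∈ U ∧ f p ≠ 0} with hO2def
  have hO1 : IsOpen O1 := by
    rw [Metric.isOpen_iff]
    intro q hq
    obtain ⟨ε, hε, hball⟩ := (Metric.nhds_basis_closedBall.mem_iff).mp (hU.mem_nhds hq.1)
    refine ⟨ε, hε, fun p hp => ?_⟩
    exact ⟨hball (Metric.ball_subset_closedBall hp),
      step q hq.1 hq.2 ε hε hball p hp⟩
  have hO2 : IsOpen O2 := by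
    rw [isOpen_iff_mem_nhds]
    intro q hq
    have h1 : U ∈ nhds q := hU.mem_nhds hq.1
    have h2 : {p | f p ≠ 0} ∈ nhds q :=
      (hf.continuousOn.continuousAt h1).eventually_ne hq.2
    exact Filter.inter_mem h1 h2
  by_contra hcon
  push_neg at hcon
  obtain ⟨p, hpU, hpne⟩ := hcon
  obtain ⟨r, hr⟩ := hUconn.isPreconnected O1 O2 hO1 hO2
    (fun z hz => by by_cases h : f z = 0 <;> [exact Or.inl ⟨hz, h⟩; exact Or.inr ⟨hz, h⟩])
    ⟨p₀, hp₀, hp₀, hf0⟩ ⟨p, hpU, hpU, hpne⟩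
  exact hr.2.2.2 hr.2.1.2
end

section
/- The second homotopy group of the 3-sphere is trivial: for any basepoint x ∈ S³, the homotopy group π₂(S³, x) has exactly one element. -/
/-!
A map `f` from a compact set `X ⊆ ℝⁿ` to the unit sphere `Sᵐ`, `n < m`, that is constant on a
closed set `S` is null-homotopic rel `S`. Approximate `f` by a `C¹` map `P` (Stone–Weierstrass),
blend `P` into `f` by an Urysohn function that vanishes on `S` and equals `1` wherever `f` is far
from its value on `S`, and project radially back to the sphere; normalized straight lines connect
`f` to the result. The cone `(r, z) ↦ r • P z` has dimension `n + 1 < m + 1`, so its complement is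
dense (a Hausdorff-dimension form of Sard's lemma) and the new map omits some point `p` near the
antipode of the base point; the stereographic chart at `p` then contracts it rel `S`.
-/

open scoped Topology

open Set Metric Module Function ContinuousMap

section Approximation

variable {X V : Type*} [TopologicalSpace X] [NormedAddCommGroup V] [NormedSpace ℝ V]

def contDiffPullback (e : X → V) : Subalgebra ℝ C(X, ℝ) where
  carrier := {f | ∃ g : V → ℝ, ContDiff ℝ 1 g ∧ ∀ x, f x = g (e x)}
  mul_mem' := by
    rintro f₁ f₂ ⟨g₁, hg₁, h₁⟩ ⟨g₂, hg₂, h₂⟩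
    exact ⟨fun v => g₁ v * g₂ v, hg₁.mul hg₂, fun x => by simp [h₁, h₂]⟩
  add_mem' := by
    rintro f₁ f₂ ⟨g₁, hg₁, h₁⟩ ⟨g₂, hg₂, h₂⟩
    exact ⟨fun v => g₁ v + g₂ v, hg₁.add hg₂, fun x => by simp [h₁, h₂]⟩
  algebraMap_mem' r := ⟨fun _ => r, contDiff_const, fun _ => rfl⟩

theorem contDiffPullback_separatesPoints {e : X → V} (he : Continuous e) (he' : Injective e) :
    (contDiffPullback e).SeparatesPoints := by
  intro x y hxy
  obtain ⟨ℓ, hℓ⟩ := SeparatingDual.exists_separating_of_ne (R := ℝ) (he'.ne hxy)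
  exact ⟨_, ⟨⟨ℓ ∘ e, ℓ.continuous.comp he⟩, ⟨ℓ, ℓ.contDiff, fun _ => rfl⟩, rfl⟩, hℓ⟩

variable [CompactSpace X] {e : X → V}

theorem exists_contDiff_abs_sub_lt (he : Continuous e) (he' : Injective e) (f : C(X, ℝ))
    {ε : ℝ} (hε : 0 < ε) : ∃ g : V → ℝ, ContDiff ℝ 1 g ∧ ∀ x, |g (e x) - f x| < ε := by
  obtain ⟨⟨h, g, hg, hhg⟩, hlt⟩ :=
    exists_mem_subalgebra_near_continuous_of_separatesPoints _
      (contDiffPullback_separatesPoints he he') f f.continuous ε hε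
  exact ⟨g, hg, fun x => by simpa [hhg] using hlt x⟩

theorem exists_contDiff_norm_sub_lt {E : Type*} [NormedAddCommGroup E] [NormedSpace ℝ E]
    [FiniteDimensional ℝ E] (he : Continuous e) (he' : Injective e) (f : C(X, E))
    {ε : ℝ} (hε : 0 < ε) : ∃ g : V → E, ContDiff ℝ 1 g ∧ ∀ x, ‖g (e x) - f x‖ < ε := by
  let b := Module.finBasis ℝ E
  set C := ∑ i, ‖b i‖ + 1
  have hC : 0 < C := by positivity
  have hcoord : ∀ i, Continuous fun x => b.coord i (f x) := fun i =>
    (LinearMap.continuous_of_finiteDimensional _).comp f.continuous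
  choose g hg hgf using fun i =>
    exists_contDiff_abs_sub_lt he he' ⟨_, hcoord i⟩ (div_pos hε hC)
  refine ⟨fun v => ∑ i, g i v • b i, ContDiff.sum fun i _ => (hg i).smul contDiff_const,
    fun x => ?_⟩
  calc ‖∑ i, g i (e x) • b i - f x‖
      = ‖∑ i, (g i (e x) - b.coord i (f x)) • b i‖ := by
        simp only [sub_smul, Finset.sum_sub_distrib, Module.Basis.coord_apply, b.sum_repr]
    _ ≤ ∑ i, |g i (e x) - b.coord i (f x)| * ‖b i‖ := by
        refine (norm_sum_le _ _).trans_eq ?_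
        simp only [norm_smul, Real.norm_eq_abs]
    _ ≤ ∑ i, ε / C * ‖b i‖ := by
        gcongr with i; exact (hgf i x).le
    _ < ε := by
        rw [← Finset.mul_sum, div_mul_eq_mul_div, div_lt_iff₀ hC]
        gcongr; linarith

end Approximation

section Sphere

variable {E X : Type*} [NormedAddCommGroup E] [NormedSpace ℝ E] [TopologicalSpace X]

theorem norm_inv_norm_smul_sub_le {a : E} (ha : ‖a‖ = 1) (w : E) :
    ‖‖w‖⁻¹ • w - a‖ ≤ 2 * ‖w - a‖ := by
  have hw : ‖‖w‖⁻¹ • w - w‖ ≤ ‖w - a‖ := by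
    rcases eq_or_ne w 0 with rfl | hw
    · simp
    calc ‖‖w‖⁻¹ • w - w‖ = |‖w‖⁻¹ - 1| * ‖w‖ := by
          rw [← Real.norm_eq_abs, ← norm_smul, sub_smul, one_smul]
      _ = |‖a‖ - ‖w‖| := by
          rw [← abs_norm w, ← abs_mul, abs_norm, sub_mul, inv_mul_cancel₀ (norm_ne_zero_iff.2 hw),
            one_mul, ha, abs_sub_comm]
      _ ≤ ‖w - a‖ := by rw [norm_sub_rev]; exact abs_norm_sub_norm_le a w
  linarith [norm_sub_le_norm_sub_add_norm_sub (‖w‖⁻¹ • w) w a]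

theorem AffineMap.lineMap_ne_zero_of_norm_sub_lt_two {a b : E} (ha : ‖a‖ = 1) (hb : ‖b‖ = 1)
    (hab : ‖a - b‖ < 2) (t : ℝ) : AffineMap.lineMap a b t ≠ 0 := by
  intro h
  rw [AffineMap.lineMap_apply_module] at h
  have hnorm : |1 - t| = |t| := by
    simpa [norm_smul, ha, hb] using congrArg norm (eq_neg_of_add_eq_zero_left h)
  have ht : t = 1 / 2 := by
    rcases abs_eq_abs.1 hnorm with h' | h' <;> linarith
  have hba : b = -a := by
    subst ht
    rw [show (1 : ℝ) - 1 / 2 = 1 / 2 by norm_num, ← smul_add] at h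
    exact eq_neg_of_add_eq_zero_right ((smul_eq_zero.1 h).resolve_left (by norm_num))
  rw [hba, sub_neg_eq_add, ← two_smul ℝ, norm_smul, ha] at hab
  norm_num at hab

noncomputable def ContinuousMap.normalize (f : C(X, E)) (hf : ∀ x, f x ≠ 0) :
    C(X, sphere (0 : E) 1) where
  toFun x := ⟨‖f x‖⁻¹ • f x, mem_sphere_zero_iff_norm.2 (norm_smul_inv_norm (hf x))⟩
  continuous_toFun := ((f.continuous.norm.inv₀ fun x => norm_ne_zero_iff.2 (hf x)).smul
    f.continuous).subtype_mk _

@[simp]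
theorem ContinuousMap.coe_normalize_apply (f : C(X, E)) (hf : ∀ x, f x ≠ 0) (x : X) :
    (f.normalize hf x : E) = ‖f x‖⁻¹ • f x := rfl

theorem homotopicRel_of_norm_sub_lt_two {f g : C(X, sphere (0 : E) 1)} {S : Set X}
    (hfg : EqOn f g S) (hlt : ∀ x, ‖(f x : E) - g x‖ < 2) : f.HomotopicRel g S := by
  let ι : C(sphere (0 : E) 1, E) := ⟨Subtype.val, continuous_subtype_val⟩
  let H := Homotopy.affine (ι.comp f) (ι.comp g)
  have hH : ∀ p, H p ≠ 0 := fun p =>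
    AffineMap.lineMap_ne_zero_of_norm_sub_lt_two (norm_eq_of_mem_sphere _)
      (norm_eq_of_mem_sphere _) (hlt p.2) p.1
  refine ⟨⟨⟨H.toContinuousMap.normalize hH, fun x => ?_, fun x => ?_⟩, fun t x hx => ?_⟩⟩
  · ext1; simp [H, ι, norm_eq_of_mem_sphere]
  · ext1; simp [H, ι, norm_eq_of_mem_sphere]
  · ext1; simp [H, ι, norm_eq_of_mem_sphere, hfg hx]

theorem homotopicRel_normalize_of_norm_sub_lt_one {f : C(X, sphere (0 : E) 1)} {w : C(X, E)}
    {S : Set X} (hw : ∀ y, w y ≠ 0) (hwf : ∀ y, ‖w y - f y‖ < 1) (hwS : ∀ y ∈ S, w y = f y) :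
    f.HomotopicRel (w.normalize hw) S := by
  refine homotopicRel_of_norm_sub_lt_two (fun y hy => ?_) fun y => ?_
  · ext1
    simp [hwS y hy, norm_eq_of_mem_sphere]
  · calc ‖(f y : E) - w.normalize hw y‖ ≤ 2 * ‖w y - f y‖ := by
          rw [norm_sub_rev]; exact norm_inv_norm_smul_sub_le (norm_eq_of_mem_sphere _) _
      _ < 2 := by linarith [hwf y]

end Sphere

theorem ContinuousMap.homotopicRel_of_eqOn {X V : Type*} [TopologicalSpace X] [AddCommGroup V]
    [TopologicalSpace V] [IsTopologicalAddGroup V] [Module ℝ V] [ContinuousSMul ℝ V]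
    {f g : C(X, V)} {S : Set X} (h : EqOn f g S) : f.HomotopicRel g S :=
  ⟨{ toHomotopy := Homotopy.affine f g, prop' := fun t x hx => by simp [h hx] }⟩

theorem homotopicRel_of_forall_ne {X E : Type*} [TopologicalSpace X] [NormedAddCommGroup E]
    [InnerProductSpace ℝ E] {p : E} (hp : ‖p‖ = 1) {f g : C(X, sphere (0 : E) 1)} {S : Set X}
    (hfg : EqOn f g S) (hf : ∀ x, (f x : E) ≠ p) (hg : ∀ x, (g x : E) ≠ p) :
    f.HomotopicRel g S := by
  let ψ := stereographic hp
  have hsource {y : sphere (0 : E) 1} (hy : (y : E) ≠ p) : y ∈ ψ.source := by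
    rw [stereographic_source]
    exact fun h => hy (congrArg Subtype.val h)
  let toChart (h : C(X, sphere (0 : E) 1)) (hh : ∀ x, (h x : E) ≠ p) : C(X, (ℝ ∙ p)ᗮ) :=
    ⟨ψ ∘ h, ψ.continuousOn.comp_continuous h.continuous fun x => hsource (hh x)⟩
  let fromChart : C((ℝ ∙ p)ᗮ, sphere (0 : E) 1) :=
    ⟨ψ.symm, continuousOn_univ.1 (stereographic_target hp ▸ ψ.continuousOn_symm)⟩
  have hchart (h : C(X, sphere (0 : E) 1)) (hh : ∀ x, (h x : E) ≠ p) :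
      fromChart.comp (toChart h hh) = h :=
    ext fun x => ψ.left_inv (hsource (hh x))
  have := (homotopicRel_of_eqOn (f := toChart f hf) (g := toChart g hg)
    fun x hx => congrArg ψ (hfg hx)).comp_continuousMap fromChart
  rwa [hchart f hf, hchart g hg] at this

theorem exists_norm_sub_lt_forall_smul_ne {E V : Type*} [NormedAddCommGroup E] [NormedSpace ℝ E]
    [FiniteDimensional ℝ E] [NormedAddCommGroup V] [NormedSpace ℝ V] [FiniteDimensional ℝ V]
    {P : V → E} (hP : ContDiff ℝ 1 P) (hVE : finrank ℝ V + 1 < finrank ℝ E) {u : E} (hu : ‖u‖ = 1)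
    {ε : ℝ} (hε : 0 < ε) : ∃ p : E, ‖p‖ = 1 ∧ ‖p - u‖ < ε ∧ ∀ (r : ℝ) (z : V), r • P z ≠ p := by
  let Q : ℝ × V → E := fun q => q.1 • P q.2
  have hQ : ContDiff ℝ 1 Q := contDiff_fst.smul (hP.comp contDiff_snd)
  have hdim : finrank ℝ (ℝ × V) < finrank ℝ E := by simpa [add_comm] using hVE
  obtain ⟨v, hvQ, hvu⟩ :=
    (hQ.dense_compl_range_of_finrank_lt_finrank hdim).exists_dist_lt u (half_pos hε)
  have hv : v ≠ 0 := fun h => hvQ ⟨(0, 0), by simp [Q, h]⟩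
  refine ⟨‖v‖⁻¹ • v, norm_smul_inv_norm hv, ?_, fun r z hrz => hvQ ⟨(‖v‖ * r, z), ?_⟩⟩
  · calc ‖‖v‖⁻¹ • v - u‖ ≤ 2 * ‖v - u‖ := norm_inv_norm_smul_sub_le hu v
      _ < 2 * (ε / 2) := by rw [← dist_eq_norm, dist_comm]; gcongr
      _ = ε := by ring
  · simp [Q, mul_smul, hrz, norm_ne_zero_iff.2 hv]

theorem exists_cutoff_of_const_on {X E : Type*} [TopologicalSpace X] [NormalSpace X]
    [NormedAddCommGroup E] {S : Set X} (hS : IsClosed S) (F : C(X, E)) {a : E}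
    (hFS : ∀ y ∈ S, F y = a) {ε : ℝ} (hε : 0 < ε) :
    ∃ φ : C(X, ℝ), EqOn φ 0 S ∧ (∀ y, φ y ∈ Icc 0 1) ∧ ∀ y, φ y < 1 → ‖F y - a‖ < ε := by
  obtain ⟨φ, hφS, hφ1, hφI⟩ := exists_continuous_zero_one_of_isClosed hS
    (isClosed_le continuous_const (F.continuous.sub continuous_const).norm :
      IsClosed {y | ε ≤ ‖F y - a‖})
    (disjoint_left.2 fun y hy hy' => by simp [hFS y hy] at hy'; linarith)
  exact ⟨φ, hφS, hφI, fun y hy => not_le.1 fun h => hy.ne (hφ1 h)⟩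

section Deformation

variable {X E V : Type*} [TopologicalSpace X] [CompactSpace X] [NormedAddCommGroup E]
  [NormedAddCommGroup V] [NormedSpace ℝ V] [FiniteDimensional ℝ V] {e : X → V} {S : Set X}

theorem exists_homotopicRel_forall_ne [NormedSpace ℝ E] [FiniteDimensional ℝ E]
    {x : sphere (0 : E) 1} (he : Continuous e) (he' : Injective e)
    (hVE : finrank ℝ V + 1 < finrank ℝ E) (hS : IsClosed S) {f : C(X, sphere (0 : E) 1)}
    (hfS : ∀ y ∈ S, f y = x) :
    ∃ (g : C(X, sphere (0 : E) 1)) (p : E), ‖p‖ = 1 ∧ (x : E) ≠ p ∧ f.HomotopicRel g S ∧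
      ∀ y, (g y : E) ≠ p := by
  have : T2Space X := T2Space.of_injective_continuous he' he
  let F : C(X, E) := ⟨fun y => f y, by fun_prop⟩
  have hF : ∀ y, ‖F y‖ = 1 := fun y => norm_eq_of_mem_sphere (f y)
  have hx : ‖(x : E)‖ = 1 := norm_eq_of_mem_sphere x
  obtain ⟨P, hP, hPF⟩ := exists_contDiff_norm_sub_lt he he' F (by norm_num : (0 : ℝ) < 1 / 4)
  obtain ⟨φ, hφS, hφI, hFx⟩ := exists_cutoff_of_const_on hS F (a := x)
    (fun y hy => by simp [F, hfS y hy]) (by norm_num : (0 : ℝ) < 1 / 4)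
  obtain ⟨p, hp, hpx, hpP⟩ :=
    exists_norm_sub_lt_forall_smul_ne hP hVE (u := -x) (by rwa [norm_neg]) one_pos
  have hpx' : 1 < ‖p - x‖ := by
    have h2 : ‖(2 : ℝ) • (x : E)‖ = 2 := by rw [norm_smul, hx]; norm_num
    have := norm_sub_le (p - -x) (p - x)
    rw [sub_sub_sub_cancel_left, sub_neg_eq_add, ← two_smul ℝ, h2] at this
    linarith
  let w : C(X, E) := ⟨fun y => F y + φ y • (P (e y) - F y), by
    have := hP.continuous; fun_prop⟩
  have hwF : ∀ y, ‖w y - F y‖ < 1 / 4 := fun y => by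
    simp only [w, ContinuousMap.coe_mk, add_sub_cancel_left, norm_smul, Real.norm_eq_abs,
      abs_of_nonneg (hφI y).1]
    exact (mul_le_of_le_one_left (norm_nonneg _) (hφI y).2).trans_lt (hPF y)
  have hw : ∀ y, w y ≠ 0 := fun y h => by
    have := hwF y
    rw [h, zero_sub, norm_neg, hF] at this
    norm_num at this
  refine ⟨w.normalize hw, p, hp, fun h => by norm_num [h] at hpx',
    homotopicRel_normalize_of_norm_sub_lt_one hw (fun y => (hwF y).trans (by norm_num))
      (fun y hy => by simp [w, F, hφS hy]), fun y hy => ?_⟩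
  -- Where `φ < 1` the map stays within `1` of `x`, hence away from `p`; where `φ = 1` it is
  -- the radial projection of `P ∘ e`.
  rcases (hφI y).2.lt_or_eq with hφy | hφy
  · have : ‖(w.normalize hw y : E) - x‖ < 1 := by
      calc _ ≤ 2 * ‖w y - x‖ := norm_inv_norm_smul_sub_le hx _
        _ ≤ 2 * (‖w y - F y‖ + ‖F y - x‖) := by
            gcongr; exact norm_sub_le_norm_sub_add_norm_sub _ _ _
        _ < 1 := by linarith [hwF y, hFx y hφy]
    rw [hy] at this
    linarith
  · refine hpP ‖P (e y)‖⁻¹ (e y) ?_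
    simpa [w, hφy] using hy

theorem homotopicRel_const_of_finrank_add_one_lt [InnerProductSpace ℝ E] [FiniteDimensional ℝ E]
    {x : sphere (0 : E) 1} (he : Continuous e) (he' : Injective e)
    (hVE : finrank ℝ V + 1 < finrank ℝ E) (hS : IsClosed S) {f : C(X, sphere (0 : E) 1)}
    (hfS : ∀ y ∈ S, f y = x) : f.HomotopicRel (const X x) S := by
  obtain ⟨g, p, hp, hxp, hfg, hgp⟩ := exists_homotopicRel_forall_ne he he' hVE hS hfS
  exact hfg.trans <| homotopicRel_of_forall_ne hp
    (fun y hy => (hfg.fst_eq_snd hy).symm.trans (hfS y hy)) hgp fun _ => hxp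

end Deformation

theorem isClosed_cube_boundary (N : Type*) [Finite N] : IsClosed (Cube.boundary N) := by
  simp only [Cube.boundary, ofPred_exists, ofPred_or]
  exact isClosed_iUnion_of_finite fun i =>
    (isClosed_eq (continuous_apply i) continuous_const).union
      (isClosed_eq (continuous_apply i) continuous_const)

section HomotopyGroup

variable {N E : Type*} [Fintype N] [NormedAddCommGroup E] [InnerProductSpace ℝ E]
  [FiniteDimensional ℝ E] {x : sphere (0 : E) 1}

theorem GenLoop.homotopic_const_of_card_add_one_lt (hN : Fintype.card N + 1 < finrank ℝ E)
    (γ : GenLoop N (sphere (0 : E) 1) x) : GenLoop.Homotopic γ GenLoop.const :=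
  homotopicRel_const_of_finrank_add_one_lt (e := fun y i => (y i : ℝ)) (by fun_prop)
    (fun y z h => funext fun i => Subtype.ext (congrFun h i)) (by simpa using hN)
    (isClosed_cube_boundary N) γ.2

theorem HomotopyGroup.subsingleton_sphere (hN : Fintype.card N + 1 < finrank ℝ E) :
    Subsingleton (HomotopyGroup N (sphere (0 : E) 1) x) :=
  ⟨fun a b => Quotient.inductionOn₂ a b fun γ δ => Quotient.sound <|
    (GenLoop.homotopic_const_of_card_add_one_lt hN γ).trans
      (GenLoop.homotopic_const_of_card_add_one_lt hN δ).symm⟩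

end HomotopyGroup

/-- The second homotopy group of the 3-sphere `S³ ⊆ ℝ⁴` is trivial: for any basepoint `x`,
`π₂(S³, x)` has exactly one element. -/
theorem pi_two_sphere_three_trivial
    (x : Metric.sphere (0 : EuclideanSpace ℝ (Fin 4)) 1) :
    Nonempty (π_ 2 (Metric.sphere (0 : EuclideanSpace ℝ (Fin 4)) 1) x) ∧
    Subsingleton (π_ 2 (Metric.sphere (0 : EuclideanSpace ℝ (Fin 4)) 1) x) :=
  ⟨⟨default⟩, HomotopyGroup.subsingleton_sphere (by simp)⟩
end
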